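/- Let S be an isometry on a complex Hilbert space H. Then the following are equivalent: (1) S is a pure isometry on H; (2) H^iso = H; (3) H^uni = {0}; (4) {0} is the only closed S-reducing subspace of H on which S is unitary. -/

import Mathlib

open ContinuousLinearMap
open scoped InnerProductSpace

variable {H : Type*} [NormedAddCommGroup H] [InnerProductSpace ℂ H] [CompleteSpace H]

/-- The purely isometric part `H^iso`: the closed linear span of the subspaces
`S^k (ker S*)`, `k ≥ 0`. -/
noncomputable def Hiso (S : H →L[ℂ] H) : Submodule ℂ H :=
  (⨆ k : ℕ, Submodule.map (S ^ k).toLinearMap (LinearMap.ker (adjoint S).toLinearMap)).topologicalClosure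

/-- The unitary part `H^uni := ⋂_{k≥0} S^k (H)`. -/
noncomputable def Huni (S : H →L[ℂ] H) : Submodule ℂ H :=
  ⨅ k : ℕ, LinearMap.range (S ^ k).toLinearMap

/-- A closed subspace `L` reduces `S` if it is invariant under `S` and `S*`. -/
def Reduces (S : H →L[ℂ] H) (L : Submodule ℂ H) : Prop :=
  (∀ x ∈ L, S x ∈ L) ∧ ∀ x ∈ L, adjoint S x ∈ L

/-- `S` is unitary on `L`: `S` maps `L` onto `L`. -/
def UnitaryOn (S : H →L[ℂ] H) (L : Submodule ℂ H) : Prop :=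
  Submodule.map S.toLinearMap L = L

/-- `S` is a pure isometry on the `S`-invariant subspace `L`: `{0}` is the only
`S`-invariant closed subspace of `L` on which `S` is unitary. -/
def PureOn (S : H →L[ℂ] H) (L : Submodule ℂ H) : Prop :=
  ∀ M : Submodule ℂ H, IsClosed (M : Set H) → M ≤ L → Submodule.map S.toLinearMap M = M → M = ⊥

/-- `P` is the orthogonal projection of `H` onto the subspace `K`. -/
def IsOrthoProj (P : H →L[ℂ] H) (K : Submodule ℂ H) : Prop :=
  ∀ x, P x ∈ K ∧ x - P x ∈ Kᗮ

/-! Everything is decided by the unitary part `H^uni`. Since `S^(n+1) H = S^n H ⊖ S^n (ker S*)`,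
`H^uni` is the orthogonal complement of `⊕ₖ S^k (ker S*)`, so `H^iso = (H^uni)ᗮ`. Moreover `H^uni`
is a closed reducing subspace on which `S` is unitary, and it contains every subspace `M` with
`S M = M` (such an `M` equals `S^k M ⊆ S^k H`). Hence each of the four conditions says
`H^uni = 0`. -/

theorem star_pow_mul_pow_eq_one {M : Type*} [Monoid M] [StarMul M] {a : M}
    (ha : star a * a = 1) (k : ℕ) : star (a ^ k) * a ^ k = 1 := by
  induction k with
  | zero => simp
  | succ k ih => rw [pow_succ, star_mul, mul_assoc, ← mul_assoc (star (a ^ k)), ih, one_mul, ha]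

section Isometry

variable {𝕜 E : Type*} [RCLike 𝕜] [NormedAddCommGroup E] [InnerProductSpace 𝕜 E]
  [CompleteSpace E] {T : E →L[𝕜] E}

theorem adjoint_pow_mul_pow_eq_one (hT : adjoint T * T = 1) (k : ℕ) :
    adjoint (T ^ k) * T ^ k = 1 :=
  star_pow_mul_pow_eq_one hT k

theorem adjoint_apply_apply_of_adjoint_mul_self_eq_one (hT : adjoint T * T = 1) (x : E) :
    adjoint T (T x) = x := by
  simpa using congr($hT x)

theorem apply_adjoint_apply_of_mem_range (hT : adjoint T * T = 1) {x : E}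
    (hx : x ∈ LinearMap.range T.toLinearMap) : T (adjoint T x) = x := by
  obtain ⟨y, rfl⟩ := hx
  simp [adjoint_apply_apply_of_adjoint_mul_self_eq_one hT]

theorem inner_apply_apply_of_adjoint_mul_self_eq_one (hT : adjoint T * T = 1) (x y : E) :
    ⟪T x, T y⟫_𝕜 = ⟪x, y⟫_𝕜 := by
  rw [← adjoint_inner_right, adjoint_apply_apply_of_adjoint_mul_self_eq_one hT]

theorem isClosed_range_of_adjoint_mul_self_eq_one (hT : adjoint T * T = 1) :
    IsClosed (LinearMap.range T.toLinearMap : Set E) := by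
  rw [LinearMap.coe_range, coe_coe]
  exact Function.LeftInverse.isClosed_range (adjoint_apply_apply_of_adjoint_mul_self_eq_one hT)
    (adjoint T).continuous T.continuous

theorem range_eq_orthogonal_ker_adjoint (hT : adjoint T * T = 1) :
    LinearMap.range T.toLinearMap = (LinearMap.ker (adjoint T).toLinearMap)ᗮ := by
  rw [← orthogonal_range, Submodule.orthogonal_orthogonal_eq_closure,
    (isClosed_range_of_adjoint_mul_self_eq_one hT).submodule_topologicalClosure_eq]

theorem apply_mem_orthogonal_map_iff (hT : adjoint T * T = 1) (K : Submodule 𝕜 E) (y : E) :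
    T y ∈ (K.map T.toLinearMap)ᗮ ↔ y ∈ Kᗮ := by
  simp only [Submodule.mem_orthogonal, Submodule.mem_map, forall_exists_index, and_imp,
    forall_apply_eq_imp_iff₂, coe_coe, inner_apply_apply_of_adjoint_mul_self_eq_one hT]

theorem mem_range_pow_succ_iff (hT : adjoint T * T = 1) (n : ℕ) (x : E) :
    x ∈ LinearMap.range (T ^ (n + 1)).toLinearMap ↔ x ∈ LinearMap.range (T ^ n).toLinearMap ∧
      x ∈ ((LinearMap.ker (adjoint T).toLinearMap).map (T ^ n).toLinearMap)ᗮ := by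
  have hTn := adjoint_pow_mul_pow_eq_one hT n
  constructor
  · rintro ⟨y, rfl⟩
    rw [coe_coe, pow_succ, mul_apply_eq_comp, apply_mem_orthogonal_map_iff hTn,
      ← range_eq_orthogonal_ker_adjoint hT]
    exact ⟨⟨T y, rfl⟩, y, rfl⟩
  · rintro ⟨⟨y, rfl⟩, hy⟩
    rw [coe_coe, apply_mem_orthogonal_map_iff hTn, ← range_eq_orthogonal_ker_adjoint hT] at hy
    obtain ⟨z, rfl⟩ := hy
    exact ⟨z, by simp [pow_succ]⟩

end Isometry

section Wold

variable {E : Type*} [NormedAddCommGroup E] [InnerProductSpace ℂ E] {S : E →L[ℂ] E}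

theorem mem_Huni_iff {x : E} : x ∈ Huni S ↔ ∀ k, x ∈ LinearMap.range (S ^ k).toLinearMap :=
  Submodule.mem_iInf _

theorem Huni_eq_orthogonal [CompleteSpace E] (hS : adjoint S * S = 1) :
    Huni S = (⨆ k : ℕ, (LinearMap.ker (adjoint S).toLinearMap).map (S ^ k).toLinearMap)ᗮ := by
  ext x
  rw [mem_Huni_iff, ← Submodule.iInf_orthogonal, Submodule.mem_iInf]
  refine ⟨fun hx k ↦ ((mem_range_pow_succ_iff hS k x).1 (hx (k + 1))).2, fun hx n ↦ ?_⟩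
  induction n with
  | zero => exact ⟨x, by simp⟩
  | succ n ih => exact (mem_range_pow_succ_iff hS n x).2 ⟨ih, hx n⟩

theorem Hiso_eq_orthogonal_Huni [CompleteSpace E] (hS : adjoint S * S = 1) :
    Hiso S = (Huni S)ᗮ := by
  rw [Huni_eq_orthogonal hS, Submodule.orthogonal_orthogonal_eq_closure, Hiso]

theorem isClosed_Huni [CompleteSpace E] (hS : adjoint S * S = 1) : IsClosed (Huni S : Set E) := by
  rw [Huni, Submodule.coe_iInf]
  exact isClosed_iInter fun k ↦
    isClosed_range_of_adjoint_mul_self_eq_one (adjoint_pow_mul_pow_eq_one hS k)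

theorem apply_mem_Huni {x : E} (hx : x ∈ Huni S) : S x ∈ Huni S := by
  refine mem_Huni_iff.2 fun k ↦ ?_
  obtain ⟨y, rfl⟩ := mem_Huni_iff.1 hx k
  exact ⟨S y, congr($((Commute.self_pow S k).eq.symm) y)⟩

theorem adjoint_apply_mem_Huni [CompleteSpace E] (hS : adjoint S * S = 1) {x : E}
    (hx : x ∈ Huni S) :
    adjoint S x ∈ Huni S := by
  refine mem_Huni_iff.2 fun k ↦ ?_
  obtain ⟨y, rfl⟩ := mem_Huni_iff.1 hx (k + 1)
  refine ⟨y, ?_⟩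
  simp [pow_succ', adjoint_apply_apply_of_adjoint_mul_self_eq_one hS]

theorem reduces_Huni [CompleteSpace E] (hS : adjoint S * S = 1) : Reduces S (Huni S) :=
  ⟨fun _ ↦ apply_mem_Huni, fun _ ↦ adjoint_apply_mem_Huni hS⟩

theorem unitaryOn_Huni [CompleteSpace E] (hS : adjoint S * S = 1) : UnitaryOn S (Huni S) := by
  refine le_antisymm (Submodule.map_le_iff_le_comap.2 fun _ ↦ apply_mem_Huni) fun x hx ↦ ?_
  have hxS : x ∈ LinearMap.range S.toLinearMap := by simpa using mem_Huni_iff.1 hx 1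
  exact ⟨adjoint S x, adjoint_apply_mem_Huni hS hx, apply_adjoint_apply_of_mem_range hS hxS⟩

theorem le_Huni_of_map_eq {M : Submodule ℂ E} (hM : M.map S.toLinearMap = M) : M ≤ Huni S := by
  intro x hx
  refine mem_Huni_iff.2 fun k ↦ ?_
  induction k generalizing x with
  | zero => exact ⟨x, by simp⟩
  | succ k ih =>
    obtain ⟨y, hy, rfl⟩ := hM.ge hx
    obtain ⟨z, rfl⟩ := ih hy
    exact ⟨z, by simp [pow_succ']⟩

end Wold

theorem statement4 (S : H →L[ℂ] H) (hS : adjoint S * S = 1) :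
    [PureOn S ⊤, Hiso S = ⊤, Huni S = ⊥,
      ∀ L : Submodule ℂ H, IsClosed (L : Set H) → Reduces S L → UnitaryOn S L → L = ⊥].TFAE := by
  tfae_have 1 → 4 := fun hpure L hL _ hLS ↦ hpure L hL le_top hLS
  tfae_have 4 → 3 := fun h ↦ h _ (isClosed_Huni hS) (reduces_Huni hS) (unitaryOn_Huni hS)
  tfae_have 3 → 1 := fun huni M _ _ hM ↦ le_bot_iff.1 (huni ▸ le_Huni_of_map_eq hM)
  tfae_have 2 ↔ 3 := by rw [Hiso_eq_orthogonal_Huni hS, Submodule.orthogonal_eq_top_iff]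
  tfae_finish
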